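/- Let v be a permutation-invariant N-qudit vector, and let ℓ, m ∈ ZMod d be such that the sets {ℓ, ℓ+1} and {m, m+1} are disjoint. Then ⟨v| D~^(ℓ) D~^(m) |v⟩ = 0. -/

import Mathlib

open Matrix Complex Finset

/-- ζ = exp(2πi/d). -/
noncomputable def zeta (d : ℕ) : ℂ := Complex.exp (2 * Real.pi * Complex.I / d)

/-- The shift matrix X = Σ_p |p+1⟩⟨p|. -/
noncomputable def shiftX (d : ℕ) [NeZero d] : Matrix (ZMod d) (ZMod d) ℂ :=
  ∑ p : ZMod d, Matrix.single (p + 1) p 1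

/-- The clock matrix Z = Σ_p ζ^p |p⟩⟨p|. -/
noncomputable def clockZ (d : ℕ) [NeZero d] : Matrix (ZMod d) (ZMod d) ℂ :=
  ∑ p : ZMod d, Matrix.single p p (zeta d ^ p.val)

/-- S^(j,k) = |j⟩⟨k| + |k⟩⟨j|. -/
noncomputable def Smat (d : ℕ) (j k : ZMod d) : Matrix (ZMod d) (ZMod d) ℂ :=
  Matrix.single j k 1 + Matrix.single k j 1

/-- A^(j,k) = −i|j⟩⟨k| + i|k⟩⟨j|. -/
noncomputable def Amat (d : ℕ) (j k : ZMod d) : Matrix (ZMod d) (ZMod d) ℂ :=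
  (-Complex.I) • Matrix.single j k 1 + Complex.I • Matrix.single k j 1

/-- D^(ℓ) = |ℓ⟩⟨ℓ| − |ℓ+1⟩⟨ℓ+1|. -/
noncomputable def Dmat (d : ℕ) (ℓ : ZMod d) : Matrix (ZMod d) (ZMod d) ℂ :=
  Matrix.single ℓ ℓ 1 - Matrix.single (ℓ + 1) (ℓ + 1) 1

/-- M acting at site i of an N-qudit system. -/
noncomputable def site (d N : ℕ) [NeZero d] (M : Matrix (ZMod d) (ZMod d) ℂ) (i : Fin N) :
    Matrix (Fin N → ZMod d) (Fin N → ZMod d) ℂ :=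
  Matrix.of fun f g =>
    M (f i) (g i) * ∏ j ∈ Finset.univ.erase i, (if f j = g j then (1 : ℂ) else 0)

/-- The collective operator M~ = Σ_i M_[i]. -/
noncomputable def coll (d N : ℕ) [NeZero d] (M : Matrix (ZMod d) (ZMod d) ℂ) :
    Matrix (Fin N → ZMod d) (Fin N → ZMod d) ℂ :=
  ∑ i : Fin N, site d N M i

/-- The N-fold tensor power of a d×d matrix. -/
noncomputable def tpow (d N : ℕ) [NeZero d] (M : Matrix (ZMod d) (ZMod d) ℂ) :
    Matrix (Fin N → ZMod d) (Fin N → ZMod d) ℂ :=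
  Matrix.of fun f g => ∏ i : Fin N, M (f i) (g i)

/-- Inner product of N-qudit vectors, conjugate-linear in the first argument. -/
noncomputable def qinner (d N : ℕ) [NeZero d] (v w : (Fin N → ZMod d) → ℂ) : ℂ :=
  ∑ f : Fin N → ZMod d, star (v f) * w f

/-- A content u is admissible if all entries are nonnegative and they sum to N. -/
def admissible (d N : ℕ) [NeZero d] (u : ZMod d → ℤ) : Prop :=
  (∀ k, 0 ≤ u k) ∧ ∑ k : ZMod d, u k = (N : ℤ)

/-- The Dicke vector |S_u⟩: sum of standard basis vectors over all f with |f⁻¹{k}| = u_k. -/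
noncomputable def dicke (d N : ℕ) [NeZero d] (u : ZMod d → ℤ) : (Fin N → ZMod d) → ℂ :=
  fun f =>
    if ∀ k : ZMod d, ((Finset.univ.filter fun i => f i = k).card : ℤ) = u k then 1 else 0

/-- The weight Σ_{m=0}^{d−1} m·u_m of a content. -/
def cweight (d : ℕ) (u : ZMod d → ℤ) : ℤ :=
  ∑ m ∈ Finset.range d, (m : ℤ) * u ((m : ℕ) : ZMod d)

/-- The code word |0̄⟩ determined by coefficients α. -/
noncomputable def codeZero (d N : ℕ) [NeZero d] (α : (ZMod d → ℤ) →₀ ℂ) :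
    (Fin N → ZMod d) → ℂ :=
  α.sum fun u c => c • dicke d N u

/-- The code word |k̄⟩ = X̄^k |0̄⟩. -/
noncomputable def codeword (d N : ℕ) [NeZero d] (α : (ZMod d → ℤ) →₀ ℂ) (k : ZMod d) :
    (Fin N → ZMod d) → ℂ :=
  (tpow d N (shiftX d)) ^ k.val *ᵥ codeZero d N α

/-- Sparseness of the code determined by α. -/
def sparse (d : ℕ) [NeZero d] (α : (ZMod d → ℤ) →₀ ℂ) : Prop :=
  ∀ u ∈ α.support, ∀ u' ∈ α.support, ∀ δ : ZMod d,
    (u, δ) ≠ (u', (0 : ZMod d)) → 4 < ∑ ξ : ZMod d, |u ξ - u' (ξ + δ)|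

/-! Both collective operators are diagonal in the computational basis: `D~^(ℓ)` multiplies `|f⟩`
by `n_ℓ(f) - n_{ℓ+1}(f)`, where `n(f)` is the content of `f`, and a permutation-invariant vector
has amplitude `β (n(f))` at `f`. Relabelling all sites by the transposition `σ = (ℓ ℓ+1)` permutes
the configurations, keeps the amplitudes and `n_m - n_{m+1}` (as `σ` fixes `m` and `m + 1`), and
negates `n_ℓ - n_{ℓ+1}`. So the summand of `⟨v| D~^(ℓ) D~^(m) |v⟩` is odd under it and the sum
vanishes. -/

theorem Fintype.sum_eq_zero_of_comp_equiv_eq_neg {ι G : Type*} [Fintype ι] [AddCommGroup G]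
    [IsAddTorsionFree G] (e : ι ≃ ι) {g : ι → G} (h : ∀ i, g (e i) = -g i) :
    ∑ i, g i = 0 :=
  self_eq_neg.mp <| by simpa [h] using (e.sum_comp g).symm

def content {ι α : Type*} [Fintype ι] [DecidableEq α] (f : ι → α) (a : α) : ℤ :=
  #{i | f i = a}

theorem content_comp_equiv {ι α : Type*} [Fintype ι] [DecidableEq α] (σ : Equiv.Perm α)
    (f : ι → α) : content (σ ∘ f) = content f ∘ σ.symm := by
  ext a
  simp only [content, Function.comp_apply, ← Equiv.eq_symm_apply]

theorem dicke_apply (d N : ℕ) [NeZero d] (u : ZMod d → ℤ) (f : Fin N → ZMod d) :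
    dicke d N u f = if content f = u then 1 else 0 := by
  simp [dicke, content, funext_iff]

theorem finsuppSum_smul_dicke_apply (d N : ℕ) [NeZero d] (β : (ZMod d → ℤ) →₀ ℂ)
    (f : Fin N → ZMod d) : (β.sum fun u c => c • dicke d N u) f = β (content f) := by
  simp only [Finsupp.sum, Finset.sum_apply, Pi.smul_apply, dicke_apply, smul_eq_mul,
    mul_ite, mul_one, mul_zero, Finset.sum_ite_eq, Finsupp.mem_support_iff, ite_not]
  split_ifs with h <;> simp [h]

theorem site_mulVec_apply_of_isDiag (d N : ℕ) [NeZero d] {M : Matrix (ZMod d) (ZMod d) ℂ}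
    (hM : M.IsDiag) (i : Fin N) (w : (Fin N → ZMod d) → ℂ) (f : Fin N → ZMod d) :
    (site d N M i *ᵥ w) f = M (f i) (f i) * w f := by
  rw [mulVec, dotProduct, Finset.sum_eq_single f]
  · simp [site]
  · intro g _ hgf
    obtain ⟨j, hj⟩ := Function.ne_iff.mp hgf
    by_cases hji : j = i
    · subst hji
      simp [site, hM (Ne.symm hj)]
    · have hprod : ∏ k ∈ univ.erase i, (if f k = g k then (1 : ℂ) else 0) = 0 :=
        Finset.prod_eq_zero (Finset.mem_erase.mpr ⟨hji, Finset.mem_univ j⟩) (if_neg (Ne.symm hj))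
      simp [site, hprod]
  · simp

theorem coll_mulVec_apply_of_isDiag (d N : ℕ) [NeZero d] {M : Matrix (ZMod d) (ZMod d) ℂ}
    (hM : M.IsDiag) (w : (Fin N → ZMod d) → ℂ) (f : Fin N → ZMod d) :
    (coll d N M *ᵥ w) f = (∑ i, M (f i) (f i)) * w f := by
  simp only [coll, Matrix.sum_mulVec, Finset.sum_apply, site_mulVec_apply_of_isDiag d N hM,
    Finset.sum_mul]

theorem isDiag_single_self {n α : Type*} [DecidableEq n] [Zero α] (i : n) (c : α) :
    (single i i c).IsDiag :=
  fun _ _ h => single_apply_of_ne _ _ _ _ _ (by rintro ⟨rfl, rfl⟩; exact h rfl)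

theorem isDiag_Dmat (d : ℕ) (ℓ : ZMod d) : (Dmat d ℓ).IsDiag :=
  (isDiag_single_self ℓ 1).sub (isDiag_single_self (ℓ + 1) 1)

theorem coll_Dmat_mulVec_apply (d N : ℕ) [NeZero d] (ℓ : ZMod d) (w : (Fin N → ZMod d) → ℂ)
    (f : Fin N → ZMod d) :
    (coll d N (Dmat d ℓ) *ᵥ w) f = ((content f ℓ - content f (ℓ + 1) : ℤ) : ℂ) * w f := by
  rw [coll_mulVec_apply_of_isDiag d N (isDiag_Dmat d ℓ)]
  congr 1
  simp [Dmat, Matrix.single_apply, Finset.sum_sub_distrib, Finset.sum_boole, content, eq_comm]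

theorem stmt18_general (d N : ℕ) [NeZero d]
    (v : (Fin N → ZMod d) → ℂ) (β : (ZMod d → ℤ) →₀ ℂ)
    (hperm : ∀ π : Equiv.Perm (ZMod d), ∀ u : ZMod d → ℤ, β (u ∘ π) = β u)
    (hv : v = β.sum fun u c => c • dicke d N u)
    (ℓ m : ZMod d)
    (hdisj : Disjoint ({ℓ, ℓ + 1} : Set (ZMod d)) ({m, m + 1} : Set (ZMod d))) :
    qinner d N v ((coll d N (Dmat d ℓ) * coll d N (Dmat d m)) *ᵥ v) = 0 := by
  set σ := Equiv.swap ℓ (ℓ + 1)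
  have hσ_fix : ∀ a ∈ ({m, m + 1} : Set (ZMod d)), σ a = a := fun a ha =>
    Equiv.swap_apply_of_ne_of_ne (fun h => Set.disjoint_right.mp hdisj ha (by simp [h]))
      (fun h => Set.disjoint_right.mp hdisj ha (by simp [h]))
  subst hv
  unfold qinner
  refine Fintype.sum_eq_zero_of_comp_equiv_eq_neg ((Equiv.refl (Fin N)).arrowCongr σ) fun f => ?_
  rw [show (Equiv.refl (Fin N)).arrowCongr σ f = σ ∘ f from rfl]
  simp only [← mulVec_mulVec, coll_Dmat_mulVec_apply, finsuppSum_smul_dicke_apply,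
    content_comp_equiv, σ, Equiv.symm_swap, hperm, Function.comp_apply, Equiv.swap_apply_left,
    Equiv.swap_apply_right, hσ_fix m (by simp), hσ_fix (m + 1) (by simp)]
  push_cast
  ring

theorem stmt18 (d N : ℕ) [NeZero d] (hd : 2 ≤ d) (hN : 1 ≤ N)
    (v : (Fin N → ZMod d) → ℂ) (β : (ZMod d → ℤ) →₀ ℂ)
    (hadm : ∀ u : ZMod d → ℤ, ¬ admissible d N u → β u = 0)
    (hperm : ∀ π : Equiv.Perm (ZMod d), ∀ u : ZMod d → ℤ, β (u ∘ π) = β u)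
    (hv : v = β.sum fun u c => c • dicke d N u)
    (ℓ m : ZMod d)
    (hdisj : Disjoint ({ℓ, ℓ + 1} : Set (ZMod d)) ({m, m + 1} : Set (ZMod d))) :
    qinner d N v ((coll d N (Dmat d ℓ) * coll d N (Dmat d m)) *ᵥ v) = 0 :=
  stmt18_general d N v β hperm hv ℓ m hdisj
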